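/- arXiv:1406.7210 — 2 statements merged into one kernel-verified Lean document; each statement's English description precedes it below -/
import Mathlib

section
/- Consider the discrete-time delayed system Σ: x(k+1) = f(x(k)) + g(x(k−d(k))) for k ∈ ℕ_0, with x(k) = φ(k) for k ∈ {−d_max,…,0}, where f(0) = g(0) = 0, f and g are non-decreasing on ℝ^n_+, and both f and g are homogeneous of degree p = 0 with respect to the dilation map δ_λ^r. Then the following statements are equivalent: (i) there exists a vector v > 0 such that f(v) + g(v) < v (componentwise); (ii) Σ is globally asymptotically stable for every nonnegative initial condition and for every delay d satisfying Assumption C (including unbounded time-varying delays); (iii) the undelayed system x(k+1) = f(x(k)) + g(x(k)) is globally asymptotically stable for every nonnegative initial condition. -/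
open Real Filter Set Asymptotics

/-- A vector field `g` is non-decreasing on the nonnegative orthant. -/
def NonDecOn (n : ℕ) (g : (Fin n → ℝ) → Fin n → ℝ) : Prop :=
  ∀ x y : Fin n → ℝ, (∀ i, 0 ≤ y i) → (∀ i, y i ≤ x i) → ∀ i, g y i ≤ g x i

/-- `f` is homogeneous of degree `p` with respect to the dilation map `δ_λ^r`. -/
def Homogeneous (n : ℕ) (r : Fin n → ℝ) (p : ℝ) (f : (Fin n → ℝ) → Fin n → ℝ) : Prop :=
  ∀ (x : Fin n → ℝ) (l : ℝ), 0 < l →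
    f (fun i => l ^ r i * x i) = fun i => l ^ p * (l ^ r i * f x i)

/-- Assumption C on the delay: `d : ℕ₀ → ℕ₀` satisfies `k - d(k) → ∞`, and
`dmax ∈ ℕ₀` bounds the initial-history window: `k - d(k) ≥ -dmax` for all `k`. -/
def DelayC (d : ℕ → ℕ) (dmax : ℕ) : Prop :=
  Tendsto (fun k : ℕ => (k : ℤ) - (d k : ℤ)) atTop atTop ∧
    ∀ k : ℕ, -(dmax : ℤ) ≤ (k : ℤ) - (d k : ℤ)

/-- A solution of the discrete delayed system `x(k+1) = f(x(k)) + g(x(k - d(k)))`, `k ∈ ℕ₀`,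
with initial condition `φ` on `{-dmax, …, 0}`. -/
def IsSolutionD (n : ℕ) (f g : (Fin n → ℝ) → Fin n → ℝ) (d : ℕ → ℕ) (dmax : ℕ)
    (φ x : ℤ → Fin n → ℝ) : Prop :=
  (∀ k : ℤ, -(dmax : ℤ) ≤ k → k ≤ 0 → x k = φ k) ∧
    ∀ k : ℕ, x ((k : ℤ) + 1) = f (x (k : ℤ)) + g (x ((k : ℤ) - (d k : ℤ)))

/-- A nonnegative initial condition on `{-dmax, …, 0}`. -/
def NonnegInitD (n : ℕ) (dmax : ℕ) (φ : ℤ → Fin n → ℝ) : Prop :=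
  ∀ k : ℤ, -(dmax : ℤ) ≤ k → k ≤ 0 → ∀ i, 0 ≤ φ k i

/-- Global asymptotic stability of the discrete delayed system: Lyapunov stability of the
origin plus global attractivity over nonnegative initial conditions. -/
def GASD (n : ℕ) (f g : (Fin n → ℝ) → Fin n → ℝ) (d : ℕ → ℕ) (dmax : ℕ) : Prop :=
  (∀ ε > (0 : ℝ), ∃ δ > (0 : ℝ), ∀ φ x : ℤ → Fin n → ℝ,
      NonnegInitD n dmax φ → IsSolutionD n f g d dmax φ x →
      (∀ k : ℤ, -(dmax : ℤ) ≤ k → k ≤ 0 → ‖φ k‖ < δ) →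
      ∀ k : ℕ, ‖x (k : ℤ)‖ < ε) ∧
  ∀ φ x : ℤ → Fin n → ℝ, NonnegInitD n dmax φ → IsSolutionD n f g d dmax φ x →
      Tendsto (fun k : ℕ => x (k : ℤ)) atTop (nhds 0)

open Topology

/-!
(i) ⇒ (ii): homogeneity of degree zero turns `f v + g v < v` into
`f (δ_λ v) + g (δ_λ v) ≤ δ_{λθ} v` for one `θ < 1` and every `λ > 0`. Monotonicity then makes each
box `[0, δ_λ v]` forward invariant whatever the delay, and, because `k - d(k) → ∞`, every solution
eventually enters each of the boxes `[0, δ_{λθ^m} v]`, which shrink to the origin.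
(ii) ⇒ (iii) is the case `d = 0`.
(iii) ⇒ (i): the orbit of `1` under `F = f + g` eventually lies strictly below `1`; by continuity
the same holds for `F + ε` with small `ε > 0`, and the componentwise minimum `v` of that orbit
satisfies `F v + ε ≤ v`.
-/

section Dilation

variable {ι : Type*} {r : ι → ℝ} {l l' : ℝ} {x y : ι → ℝ}

noncomputable def dilation (r : ι → ℝ) (l : ℝ) (x : ι → ℝ) : ι → ℝ := fun i => l ^ r i * x i

lemma dilation_add : dilation r l (x + y) = dilation r l x + dilation r l y := by
  ext i; simp [dilation, mul_add]

lemma dilation_mul (hl : 0 ≤ l) (hl' : 0 ≤ l') :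
    dilation r (l * l') x = dilation r l (dilation r l' x) := by
  ext i; simp [dilation, mul_rpow hl hl', mul_assoc]

lemma dilation_one : dilation r 1 x = x := by
  ext i; simp [dilation]

lemma dilation_zero_left (hr : ∀ i, r i ≠ 0) : dilation r 0 x = 0 := by
  ext i; simp [dilation, zero_rpow (hr i)]

lemma dilation_mono (hl : 0 ≤ l) (h : x ≤ y) : dilation r l x ≤ dilation r l y :=
  fun i => mul_le_mul_of_nonneg_left (h i) (rpow_nonneg hl _)

lemma dilation_le_dilation (hr : ∀ i, 0 ≤ r i) (hx : 0 ≤ x) (hl : 0 ≤ l) (hll' : l ≤ l') :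
    dilation r l x ≤ dilation r l' x :=
  fun i => mul_le_mul_of_nonneg_right (rpow_le_rpow hl hll' (hr i)) (hx i)

lemma dilation_pos (hl : 0 < l) (hx : ∀ i, 0 < x i) (i : ι) : 0 < dilation r l x i :=
  mul_pos (rpow_pos_of_pos hl _) (hx i)

lemma continuous_dilation (hr : ∀ i, 0 ≤ r i) (x : ι → ℝ) : Continuous fun l => dilation r l x :=
  continuous_pi fun i => (continuous_id.rpow_const fun _ => Or.inr (hr i)).mul continuous_const

lemma eventually_le_dilation [Finite ι] (hr : ∀ i, 0 < r i) (hx : ∀ i, 0 < x i) (y : ι → ℝ) :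
    ∀ᶠ l in atTop, y ≤ dilation r l x :=
  eventually_all.2 fun i =>
    ((tendsto_rpow_atTop (hr i)).atTop_mul_const (hx i)).eventually_ge_atTop (y i)

lemma exists_lt_dilation [Finite ι] (hr : ∀ i, 0 ≤ r i) (h : ∀ i, y i < x i) :
    ∃ θ ∈ Ioo (0 : ℝ) 1, ∀ i, y i < dilation r θ x i := by
  have hlim : Tendsto (fun θ => dilation r θ x) (𝓝[<] 1) (𝓝 x) := by
    simpa [dilation_one] using ((continuous_dilation hr x).tendsto 1).mono_left nhdsWithin_le_nhds
  have hev := eventually_all.2 fun i => (tendsto_pi_nhds.1 hlim i).eventually_const_lt (h i)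
  exact (hev.and (Ioo_mem_nhdsLT zero_lt_one)).exists.imp fun θ h => ⟨h.2, h.1⟩

end Dilation

lemma MonotoneOn.apply_mem_Icc {α β : Type*} [Preorder α] [Zero α] [Preorder β] [Zero β]
    {F : α → β} (hF : MonotoneOn F (Ici 0)) (hF0 : 0 ≤ F 0) {x w : α} (hx : x ∈ Icc 0 w) :
    F x ∈ Icc 0 (F w) :=
  ⟨hF0.trans (hF self_mem_Ici hx.1 hx.1), hF hx.1 (hx.1.trans hx.2) hx.2⟩

lemma norm_le_norm_of_mem_Icc {ι : Type*} [Fintype ι] {x w : ι → ℝ} (h : x ∈ Icc 0 w) :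
    ‖x‖ ≤ ‖w‖ :=
  (pi_norm_le_iff_of_nonneg (norm_nonneg w)).2 fun i =>
    calc ‖x i‖ = x i := Real.norm_of_nonneg (h.1 i)
      _ ≤ w i := h.2 i
      _ ≤ ‖w‖ := (le_abs_self _).trans (norm_le_pi_norm w i)

lemma tendsto_zero_of_forall_eventually_mem_Icc {α ι : Type*} [Fintype ι] {l : Filter α}
    {x : α → ι → ℝ} {w : ℕ → ι → ℝ} (hw : Tendsto w atTop (𝓝 0))
    (hx : ∀ m, ∀ᶠ a in l, x a ∈ Icc 0 (w m)) : Tendsto x l (𝓝 0) := by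
  refine Metric.tendsto_nhds.2 fun ε hε => ?_
  obtain ⟨m, hm⟩ := (tendsto_norm_zero.comp hw |>.eventually_lt_const hε).exists
  exact (hx m).mono fun a ha => by
    rw [dist_zero_right]; exact (norm_le_norm_of_mem_Icc ha).trans_lt hm

theorem exists_map_le_of_iterate_le {α : Type*} [SemilatticeInf α] {G : α → α} {a w : α}
    (hG : MonotoneOn G (Ici a)) (hGa : a ≤ G a) (hw : a ≤ w) {m : ℕ} (hm : G^[m + 1] w ≤ w) :
    ∃ v, a ≤ v ∧ G v ≤ v := by
  have hy : ∀ k, a ≤ G^[k] w := by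
    intro k
    induction k with
    | zero => exact hw
    | succ k ih => rw [Function.iterate_succ_apply']; exact hGa.trans (hG self_mem_Ici ih ih)
  set v := (Finset.range (m + 1)).inf' Finset.nonempty_range_add_one (G^[·] w)
  have hv : a ≤ v := Finset.le_inf' _ _ fun k _ => hy k
  have hGv : ∀ k ≤ m, G v ≤ G^[k + 1] w := fun k hk => by
    rw [Function.iterate_succ_apply']
    exact hG hv (hy k) (Finset.inf'_le _ (Finset.mem_range.2 (Nat.lt_succ_of_le hk)))
  refine ⟨v, hv, Finset.le_inf' _ _ fun k hk => ?_⟩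
  cases k with
  | zero => exact (hGv m le_rfl).trans hm
  | succ k => exact hGv k (by simp at hk; omega)

theorem exists_pos_lt_of_iterate_lt {ι : Type*} [Finite ι] {F : (ι → ℝ) → ι → ℝ}
    (hFc : Continuous F) (hF : MonotoneOn F (Ici 0)) (hF0 : 0 ≤ F 0) {w : ι → ℝ} (hw : 0 ≤ w)
    {m : ℕ} (hm : ∀ i, F^[m + 1] w i < w i) : ∃ v : ι → ℝ, (∀ i, 0 < v i) ∧ ∀ i, F v i < v i := by
  -- Perturbing `F` by `ε > 0` keeps the iterate below `w` by continuity, and turns the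
  -- sub-solution `F v + ε ≤ v` of the perturbed map into a strict one of `F`.
  set G : ℝ → (ι → ℝ) → ι → ℝ := fun ε x => F x + fun _ => ε
  have hGc : ∀ k, Continuous fun ε => (G ε)^[k] w := by
    intro k
    induction k with
    | zero => exact continuous_const
    | succ k ih =>
      simp only [Function.iterate_succ_apply']
      exact (hFc.comp ih).add (continuous_pi fun _ => continuous_id)
  obtain ⟨ε, hεm, hε⟩ : ∃ ε, (∀ i, (G ε)^[m + 1] w i < w i) ∧ 0 < ε := by
    have hG0 : G 0 = F := funext fun x => add_zero (F x)
    have hlim := (hGc (m + 1)).tendsto 0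
    rw [hG0] at hlim
    exact ((eventually_all.2 fun i => (tendsto_pi_nhds.1 hlim i).eventually_lt_const (hm i)
      ).filter_mono nhdsWithin_le_nhds |>.and (self_mem_nhdsWithin (s := Ioi 0))).exists
  have hGmono : MonotoneOn (G ε) (Ici 0) := fun x hx y hy hxy =>
    add_le_add_left (hF hx hy hxy) _
  have hG0 : 0 ≤ G ε 0 := add_nonneg hF0 fun _ => hε.le
  obtain ⟨v, hv, hGv⟩ := exists_map_le_of_iterate_le hGmono hG0 hw fun i => (hεm i).le
  have hGv' : ∀ i, F v i + ε ≤ v i := hGv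
  have hFv : ∀ i, 0 ≤ F v i := (hF.apply_mem_Icc hF0 ⟨hv, le_rfl⟩).1
  exact ⟨v, fun i => by linarith [hGv' i, hFv i], fun i => by linarith [hGv' i]⟩

lemma NonDecOn.monotoneOn {n : ℕ} {f : (Fin n → ℝ) → Fin n → ℝ} (h : NonDecOn n f) :
    MonotoneOn f (Ici 0) :=
  fun y hy x _ hxy => h x y hy hxy

lemma Homogeneous.map_dilation {n : ℕ} {r : Fin n → ℝ} {f : (Fin n → ℝ) → Fin n → ℝ}
    (h : Homogeneous n r 0 f) {l : ℝ} (hl : 0 < l) (x : Fin n → ℝ) :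
    f (dilation r l x) = dilation r l (f x) := by
  unfold dilation
  simpa using h x l hl

lemma delayC_zero : DelayC (fun _ => 0) 0 :=
  ⟨by simpa using tendsto_natCast_atTop_atTop, fun k => by simp⟩

section DelayedSystem

variable {n : ℕ} {f g : (Fin n → ℝ) → Fin n → ℝ} {d : ℕ → ℕ} {dmax : ℕ}
  {φ x : ℤ → Fin n → ℝ}

lemma IsSolutionD.succ_mem_Icc (hsol : IsSolutionD n f g d dmax φ x)
    (hf : MonotoneOn f (Ici 0)) (hg : MonotoneOn g (Ici 0)) (hf0 : 0 ≤ f 0) (hg0 : 0 ≤ g 0)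
    {w w' : Fin n → ℝ} (hw : f w + g w ≤ w') {k : ℕ} (hk : x k ∈ Icc 0 w)
    (hkd : x (k - d k) ∈ Icc 0 w) : x (k + 1) ∈ Icc 0 w' := by
  have hfk := hf.apply_mem_Icc hf0 hk
  have hgk := hg.apply_mem_Icc hg0 hkd
  rw [hsol.2 k]
  exact ⟨add_nonneg hfk.1 hgk.1, (add_le_add hfk.2 hgk.2).trans hw⟩

lemma IsSolutionD.mem_Icc (hsol : IsSolutionD n f g d dmax φ x)
    (hf : MonotoneOn f (Ici 0)) (hg : MonotoneOn g (Ici 0)) (hf0 : 0 ≤ f 0) (hg0 : 0 ≤ g 0)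
    (hd : ∀ k : ℕ, -(dmax : ℤ) ≤ k - d k) {w : Fin n → ℝ} (hw : f w + g w ≤ w)
    (hφ : ∀ k : ℤ, -(dmax : ℤ) ≤ k → k ≤ 0 → φ k ∈ Icc 0 w) {j : ℤ} (hj : -(dmax : ℤ) ≤ j) :
    x j ∈ Icc 0 w := by
  suffices h : ∀ K : ℕ, ∀ j : ℤ, -(dmax : ℤ) ≤ j → j ≤ K → x j ∈ Icc 0 w from
    h j.toNat j hj (Int.self_le_toNat j)
  intro K
  induction K with
  | zero =>
    intro j hj hj0
    rw [hsol.1 j hj (mod_cast hj0)]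
    exact hφ j hj (mod_cast hj0)
  | succ K ih =>
    intro j hj hjK
    rcases (show j ≤ K ∨ j = K + 1 by omega) with hle | rfl
    · exact ih j hj hle
    · exact hsol.succ_mem_Icc hf hg hf0 hg0 hw (ih K (by omega) le_rfl) (ih _ (hd K) (by omega))

lemma IsSolutionD.eventually_mem_Icc (hsol : IsSolutionD n f g d dmax φ x)
    (hf : MonotoneOn f (Ici 0)) (hg : MonotoneOn g (Ici 0)) (hf0 : 0 ≤ f 0) (hg0 : 0 ≤ g 0)
    (hd : Tendsto (fun k : ℕ => (k : ℤ) - d k) atTop atTop) {w w' : Fin n → ℝ}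
    (hw : f w + g w ≤ w') (hx : ∀ᶠ j in atTop, x j ∈ Icc 0 w) :
    ∀ᶠ j in atTop, x j ∈ Icc 0 w' := by
  obtain ⟨K, hK⟩ := eventually_atTop.1
    ((tendsto_natCast_atTop_atTop.eventually hx).and (hd.eventually hx))
  refine eventually_atTop.2 ⟨K + 1, fun j hj => ?_⟩
  obtain ⟨k, rfl⟩ : ∃ k : ℕ, j = k + 1 := ⟨(j - 1).toNat, by omega⟩
  exact hsol.succ_mem_Icc hf hg hf0 hg0 hw (hK k (by omega)).1 (hK k (by omega)).2

lemma IsSolutionD.tendsto_zero (hsol : IsSolutionD n f g d dmax φ x)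
    (hf : MonotoneOn f (Ici 0)) (hg : MonotoneOn g (Ici 0)) (hf0 : 0 ≤ f 0) (hg0 : 0 ≤ g 0)
    (hd : DelayC d dmax) {w : ℕ → Fin n → ℝ} (hw0 : f (w 0) + g (w 0) ≤ w 0)
    (hw : ∀ m, f (w m) + g (w m) ≤ w (m + 1))
    (hφ : ∀ k : ℤ, -(dmax : ℤ) ≤ k → k ≤ 0 → φ k ∈ Icc 0 (w 0))
    (hlim : Tendsto w atTop (𝓝 0)) : Tendsto (fun k : ℕ => x k) atTop (𝓝 0) := by
  have hev : ∀ m, ∀ᶠ j in atTop, x j ∈ Icc 0 (w m) := by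
    intro m
    induction m with
    | zero => exact (eventually_ge_atTop _).mono fun j hj =>
        hsol.mem_Icc hf hg hf0 hg0 hd.2 hw0 hφ hj
    | succ m ih => exact hsol.eventually_mem_Icc hf hg hf0 hg0 hd.1 (hw m) ih
  exact tendsto_zero_of_forall_eventually_mem_Icc hlim fun m =>
    tendsto_natCast_atTop_atTop.eventually (hev m)

lemma stable_of_forall_exists_subsolution
    (hf : MonotoneOn f (Ici 0)) (hg : MonotoneOn g (Ici 0)) (hf0 : 0 ≤ f 0) (hg0 : 0 ≤ g 0)
    (hd : ∀ k : ℕ, -(dmax : ℤ) ≤ k - d k)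
    (hsub : ∀ ε > 0, ∃ w : Fin n → ℝ, (∀ i, 0 < w i) ∧ f w + g w ≤ w ∧ ‖w‖ < ε) :
    ∀ ε > (0 : ℝ), ∃ δ > (0 : ℝ), ∀ φ x : ℤ → Fin n → ℝ,
      NonnegInitD n dmax φ → IsSolutionD n f g d dmax φ x →
      (∀ k : ℤ, -(dmax : ℤ) ≤ k → k ≤ 0 → ‖φ k‖ < δ) → ∀ k : ℕ, ‖x (k : ℤ)‖ < ε := by
  intro ε hε
  obtain ⟨w, hw0, hw, hwε⟩ := hsub ε hε
  obtain ⟨δ, hδ, hball⟩ := Metric.mem_nhds_iff.1 (pi_Iic_mem_nhds hw0)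
  refine ⟨δ, hδ, fun φ x hφ hsol hsmall k => ?_⟩
  have hφw : ∀ k : ℤ, -(dmax : ℤ) ≤ k → k ≤ 0 → φ k ∈ Icc 0 w := fun k h₁ h₂ =>
    ⟨hφ k h₁ h₂, hball (mem_ball_zero_iff.2 (hsmall k h₁ h₂))⟩
  exact (norm_le_norm_of_mem_Icc (hsol.mem_Icc hf hg hf0 hg0 hd hw hφw (by omega))).trans_lt hwε

theorem gasd_of_exists_lt {r : Fin n → ℝ} (hr : ∀ i, 0 < r i)
    (hf : MonotoneOn f (Ici 0)) (hg : MonotoneOn g (Ici 0)) (hf0 : 0 ≤ f 0) (hg0 : 0 ≤ g 0)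
    (hfhom : Homogeneous n r 0 f) (hghom : Homogeneous n r 0 g) {v : Fin n → ℝ}
    (hv : ∀ i, 0 < v i) (hlt : ∀ i, f v i + g v i < v i) (hd : DelayC d dmax) :
    GASD n f g d dmax := by
  have hr' : ∀ i, 0 ≤ r i := fun i => (hr i).le
  obtain ⟨θ, ⟨hθ0, hθ1⟩, hθ⟩ := exists_lt_dilation hr' hlt
  have hcontract : ∀ l > 0,
      f (dilation r l v) + g (dilation r l v) ≤ dilation r (l * θ) v := fun l hl => by
    rw [hfhom.map_dilation hl, hghom.map_dilation hl, ← dilation_add, dilation_mul hl.le hθ0.le]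
    exact dilation_mono hl.le fun i => (hθ i).le
  have hsub : ∀ l > 0, f (dilation r l v) + g (dilation r l v) ≤ dilation r l v := fun l hl =>
    (hcontract l hl).trans (dilation_le_dilation hr' (fun i => (hv i).le) (by positivity)
      (mul_le_of_le_one_right hl.le hθ1.le))
  have hshrink : Tendsto (fun l => dilation r l v) (𝓝 0) (𝓝 0) := by
    simpa [dilation_zero_left fun i => (hr i).ne'] using (continuous_dilation hr' v).tendsto 0
  refine ⟨stable_of_forall_exists_subsolution hf hg hf0 hg0 hd.2 fun ε hε => ?_,
    fun φ x hφ hsol => ?_⟩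
  · obtain ⟨l, hlε, hl⟩ := ((tendsto_norm_zero.comp hshrink).eventually_lt_const hε
      |>.filter_mono nhdsWithin_le_nhds |>.and (self_mem_nhdsWithin (s := Ioi 0))).exists
    exact ⟨dilation r l v, dilation_pos hl hv, hsub l hl, hlε⟩
  · obtain ⟨l, hφl, hl⟩ := (((eventually_all_finset (Finset.Icc (-(dmax : ℤ)) 0)).2
      fun k _ => eventually_le_dilation hr hv (φ k)).and (eventually_gt_atTop 0)).exists
    refine hsol.tendsto_zero hf hg hf0 hg0 hd (w := fun m => dilation r (l * θ ^ m) v)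
      (by simpa using hsub l hl) (fun m => ?_)
      (fun k h₁ h₂ => ⟨hφ k h₁ h₂, by simpa using hφl k (Finset.mem_Icc.2 ⟨h₁, h₂⟩)⟩) ?_
    · simpa [pow_succ, mul_assoc] using hcontract (l * θ ^ m) (by positivity)
    · exact hshrink.comp (by
        simpa using (tendsto_pow_atTop_nhds_zero_of_lt_one hθ0.le hθ1).const_mul l)

lemma isSolutionD_iterate (x₀ : Fin n → ℝ) :
    IsSolutionD n f g (fun _ => 0) 0 (fun j => (f + g)^[j.toNat] x₀)
      (fun j => (f + g)^[j.toNat] x₀) :=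
  ⟨fun _ _ _ => rfl, fun k => by simp [Function.iterate_succ_apply']⟩

theorem exists_lt_of_gasd_zero (hfc : Continuous f) (hgc : Continuous g)
    (hf : MonotoneOn f (Ici 0)) (hg : MonotoneOn g (Ici 0)) (hf0 : 0 ≤ f 0) (hg0 : 0 ≤ g 0)
    (h : GASD n f g (fun _ => 0) 0) :
    ∃ v : Fin n → ℝ, (∀ i, 0 < v i) ∧ ∀ i, f v i + g v i < v i := by
  have hinit : NonnegInitD n 0 fun j => (f + g)^[j.toNat] 1 := fun k h₁ h₂ i => by
    obtain rfl : k = 0 := by omega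
    simp
  have hlim : Tendsto (fun k : ℕ => (f + g)^[k] 1) atTop (𝓝 0) := by
    simpa using h.2 _ _ hinit (isSolutionD_iterate 1)
  obtain ⟨m, hm⟩ := eventually_atTop.1 (eventually_all.2 fun i =>
    (tendsto_pi_nhds.1 hlim i).eventually_lt_const zero_lt_one)
  exact exists_pos_lt_of_iterate_lt (hfc.add hgc) (hf.add hg) (add_nonneg hf0 hg0) zero_le_one
    (hm (m + 1) m.le_succ)

end DelayedSystem

/-- Theorem (delay-independent stability of discrete-time homogeneous non-decreasing systems
of degree zero): for `x(k+1) = f(x(k)) + g(x(k-d(k)))` with `f, g` continuous, non-decreasing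
on the nonnegative orthant, `f(0) = g(0) = 0`, and both homogeneous of degree `p = 0` with
respect to the dilation map `δ_λ^r`, the following are equivalent:
(i) there exists `v > 0` with `f(v) + g(v) < v`;
(ii) the system is globally asymptotically stable for every delay satisfying Assumption C;
(iii) the undelayed system is globally asymptotically stable. -/
theorem discrete_homogeneous_nondecreasing_delay_independent_stability
    (n : ℕ) (f g : (Fin n → ℝ) → Fin n → ℝ)
    (r : Fin n → ℝ) (hr : ∀ i, 0 < r i)
    (hf0 : f 0 = 0) (hg0 : g 0 = 0)
    (hfc : Continuous f) (hgc : Continuous g)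
    (hfmono : NonDecOn n f) (hgmono : NonDecOn n g)
    (hfhom : Homogeneous n r 0 f) (hghom : Homogeneous n r 0 g) :
    ((∃ v : Fin n → ℝ, (∀ i, 0 < v i) ∧ ∀ i, f v i + g v i < v i) ↔
      (∀ d : ℕ → ℕ, ∀ dmax : ℕ, DelayC d dmax → GASD n f g d dmax)) ∧
    ((∀ d : ℕ → ℕ, ∀ dmax : ℕ, DelayC d dmax → GASD n f g d dmax) ↔
      GASD n f g (fun _ => 0) 0) := by
  have h12 : (∃ v : Fin n → ℝ, (∀ i, 0 < v i) ∧ ∀ i, f v i + g v i < v i) →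
      ∀ d dmax, DelayC d dmax → GASD n f g d dmax := fun ⟨_, hv, hlt⟩ _ _ hd =>
    gasd_of_exists_lt hr hfmono.monotoneOn hgmono.monotoneOn hf0.ge hg0.ge hfhom hghom hv hlt hd
  have h23 : (∀ d dmax, DelayC d dmax → GASD n f g d dmax) → GASD n f g (fun _ => 0) 0 :=
    fun h => h _ _ delayC_zero
  have h31 : GASD n f g (fun _ => 0) 0 →
      ∃ v : Fin n → ℝ, (∀ i, 0 < v i) ∧ ∀ i, f v i + g v i < v i :=
    exists_lt_of_gasd_zero hfc hgc hfmono.monotoneOn hgmono.monotoneOn hf0.ge hg0.ge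
  exact ⟨⟨h12, h31 ∘ h23⟩, ⟨h23, h12 ∘ h31⟩⟩
end

section
/- Consider the discrete-time delayed system Σ: x(k+1) = f(x(k)) + g(x(k−d(k))) for k ∈ ℕ_0, with x(k) = φ(k) for k ∈ {−d_max,…,0}, where f(0) = g(0) = 0, f and g are non-decreasing on ℝ^n_+, both f and g are homogeneous of degree p = 0 with respect to the dilation map δ_λ^r, the delay d satisfies Assumption C, and there exists v > 0 with f(v) + g(v) < v. Let μ : ℕ → ℝ_+ be a function such that: (i) μ(k) > 0 for all k ∈ ℕ; (ii) μ(k+1) ≥ μ(k) for all k ∈ ℕ; (iii) μ(k) → +∞ as k → +∞; and (iv) the limits L_1 := lim_{k→∞} μ(k+1)/μ(k) and L_2 := lim_{k→∞} μ(k+1)/μ(k−d(k)) exist and for each i ∈ {1,…,n}: L_1^{r_i/r_max}·f_i(v)/v_i + L_2^{r_i/r_max}·g_i(v)/v_i < 1. Then every solution of Σ starting from a nonnegative initial condition satisfies, for each i, (x_i(k)/v_i)^{r_max/r_i} = O(1/μ(k)) as k → ∞, i.e., there is C > 0 with (x_i(k)/v_i)^{r_max/r_i} ≤ C/μ(k)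 for all k ∈ ℕ. -/
open Real Filter Set Asymptotics

/-! Solutions stay nonnegative, and since `f`, `g` are monotone and homogeneous of degree zero, a
bound `x(m) ≤ δ_{s(m)} v` on the past propagates to `x(k+1) ≤ δ_{s(k+1)} v` as soon as
`s(k)^{r_j} f_j(v) + s(k-d(k))^{r_j} g_j(v) ≤ s(k+1)^{r_j} v_j`. A constant scale `Λ` satisfies
this because `f(v) + g(v) ≤ v`, which bounds the solution. The scale `s(k) = (C/μ(k))^{1/r_max}`
satisfies it for large `k`: dividing by `(C/μ(k+1))^{r_j/r_max}` leaves the condition on `L₁, L₂`,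
which holds eventually because it holds strictly in the limit. With `C = Λ^{r_max} μ(K)` the
second scale dominates the first on the initial window `[1, K]`, since `μ` is non-decreasing. -/

theorem Int.strong_induction_from_window {P : ℤ → Prop} {a b : ℤ}
    (hbase : ∀ k, a ≤ k → k ≤ b → P k)
    (hstep : ∀ k, b ≤ k → (∀ m, a ≤ m → m ≤ k → P m) → P (k + 1)) :
    ∀ k, a ≤ k → P k := by
  have hwindow : ∀ k, b ≤ k → ∀ m, a ≤ m → m ≤ k → P m := by
    intro k hk
    induction k, hk using Int.leInduction with
    | base => exact hbase
    | succ k hk ih =>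
      intro m ham hmk
      rcases hmk.lt_or_eq with hmk | rfl
      · exact ih m ham (Int.lt_add_one_iff.1 hmk)
      · exact hstep k hk ih
  intro k hak
  rcases le_total k b with hkb | hbk
  · exact hbase k hak hkb
  · exact hwindow k hbk k hak le_rfl

theorem rpow_div_le_of_le_rpow_mul {y w s ρ R : ℝ} (hy : 0 ≤ y) (hw : 0 < w) (hs : 0 ≤ s)
    (hρ : 0 < ρ) (hR : 0 ≤ R) (h : y ≤ s ^ ρ * w) : (y / w) ^ (R / ρ) ≤ s ^ R :=
  calc (y / w) ^ (R / ρ) ≤ (s ^ ρ) ^ (R / ρ) :=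
        Real.rpow_le_rpow (div_nonneg hy hw.le) ((div_le_iff₀ hw).2 h) (div_nonneg hR hρ.le)
    _ = s ^ R := by rw [← Real.rpow_mul hs, mul_div_cancel₀ R hρ.ne']

theorem le_rpow_mul_div_rpow_inv {Λ ρ m M : ℝ} (hΛ : 0 ≤ Λ) (hρ : 0 < ρ) (hm : 0 < m)
    (hmM : m ≤ M) : Λ ≤ (Λ ^ ρ * M / m) ^ ρ⁻¹ :=
  calc Λ = (Λ ^ ρ) ^ ρ⁻¹ := (Real.rpow_rpow_inv hΛ hρ.ne').symm
    _ ≤ (Λ ^ ρ * M / m) ^ ρ⁻¹ := by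
      refine Real.rpow_le_rpow (Real.rpow_nonneg hΛ _) ?_ (inv_nonneg.2 hρ.le)
      rw [mul_div_assoc]
      exact le_mul_of_one_le_right (Real.rpow_nonneg hΛ _) ((one_le_div hm).2 hmM)

theorem rpow_div_mul_add_le {c a b t e F G V : ℝ} (hc : 0 ≤ c) (ha : 0 < a) (hb : 0 < b)
    (ht : 0 < t) (hV : 0 < V) (h : (t / a) ^ e * (F / V) + (t / b) ^ e * (G / V) ≤ 1) :
    (c / a) ^ e * F + (c / b) ^ e * G ≤ (c / t) ^ e * V := by
  have hFG : (t / a) ^ e * F + (t / b) ^ e * G ≤ V := by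
    rwa [← div_le_one hV, add_div, mul_div_assoc, mul_div_assoc]
  have hsplit : ∀ u, 0 < u → (c / u) ^ e = (c / t) ^ e * (t / u) ^ e := fun u hu => by
    rw [← Real.mul_rpow (div_nonneg hc ht.le) (div_nonneg ht.le hu.le),
      div_mul_div_cancel₀ ht.ne']
  calc (c / a) ^ e * F + (c / b) ^ e * G
      = (c / t) ^ e * ((t / a) ^ e * F + (t / b) ^ e * G) := by
        rw [hsplit a ha, hsplit b hb]; ring
    _ ≤ (c / t) ^ e * V := mul_le_mul_of_nonneg_left hFG (by positivity)

theorem eventually_rpow_mul_add_rpow_mul_lt {α ι : Type*} [Finite ι] {l : Filter α}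
    {p q : α → ℝ} {L₁ L₂ : ℝ} (hp : Tendsto p l (nhds L₁)) (hq : Tendsto q l (nhds L₂))
    {e F G : ι → ℝ} (he : ∀ j, 0 ≤ e j) (h : ∀ j, L₁ ^ e j * F j + L₂ ^ e j * G j < 1) :
    ∀ᶠ k in l, ∀ j, p k ^ e j * F j + q k ^ e j * G j < 1 := by
  rw [eventually_all]
  intro j
  exact (((hp.rpow_const (Or.inr (he j))).mul_const _).add
    ((hq.rpow_const (Or.inr (he j))).mul_const _)).eventually_lt_const (h j)

namespace NonDecOn

variable {n : ℕ} {f : (Fin n → ℝ) → Fin n → ℝ}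

theorem apply_nonneg (hf : NonDecOn n f) (hf0 : f 0 = 0) {y : Fin n → ℝ} (hy : ∀ j, 0 ≤ y j)
    (j : Fin n) : 0 ≤ f y j := by
  simpa [hf0] using hf y 0 (fun _ => le_rfl) hy j

theorem apply_le_dilation (hf : NonDecOn n f) {r : Fin n → ℝ} (hhom : Homogeneous n r 0 f)
    {l : ℝ} (hl : 0 < l) {y v : Fin n → ℝ} (hy : ∀ j, 0 ≤ y j)
    (hyv : ∀ j, y j ≤ l ^ r j * v j) (j : Fin n) : f y j ≤ l ^ r j * f v j := by
  simpa [hhom v l hl] using hf _ y hy hyv j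

end NonDecOn

namespace IsSolutionD

variable {n : ℕ} {f g : (Fin n → ℝ) → Fin n → ℝ} {d : ℕ → ℕ} {dmax : ℕ}
  {φ x : ℤ → Fin n → ℝ}

theorem nonneg (hx : IsSolutionD n f g d dmax φ x) (hfmono : NonDecOn n f)
    (hgmono : NonDecOn n g) (hf0 : f 0 = 0) (hg0 : g 0 = 0)
    (hd : ∀ k : ℕ, -(dmax : ℤ) ≤ k - d k) (hφ : NonnegInitD n dmax φ) :
    ∀ k, -(dmax : ℤ) ≤ k → ∀ j, 0 ≤ x k j := by
  refine Int.strong_induction_from_window (b := 0) (fun k hk hk0 => ?_) fun k hk ih => ?_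
  · rw [hx.1 k hk hk0]
    exact hφ k hk hk0
  · lift k to ℕ using hk
    rw [hx.2 k]
    exact fun j => add_nonneg (hfmono.apply_nonneg hf0 (ih k (by omega) le_rfl) j)
      (hgmono.apply_nonneg hg0 (ih _ (hd k) (by omega)) j)

theorem le_dilation_of_supersolution (hx : IsSolutionD n f g d dmax φ x)
    (hfmono : NonDecOn n f) (hgmono : NonDecOn n g) {r : Fin n → ℝ}
    (hfhom : Homogeneous n r 0 f) (hghom : Homogeneous n r 0 g)
    (hnonneg : ∀ k, -(dmax : ℤ) ≤ k → ∀ j, 0 ≤ x k j)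
    {v : Fin n → ℝ} {s : ℤ → ℝ} {a : ℤ} {b : ℕ} (ha : -(dmax : ℤ) ≤ a)
    (hs : ∀ k, a ≤ k → 0 < s k) (hdelay : ∀ k : ℕ, b ≤ k → a ≤ k - d k)
    (hbase : ∀ k, a ≤ k → k ≤ b → ∀ j, x k j ≤ s k ^ r j * v j)
    (hsuper : ∀ k : ℕ, b ≤ k → ∀ j,
      s k ^ r j * f v j + s (k - d k) ^ r j * g v j ≤ s (k + 1) ^ r j * v j) :
    ∀ k, a ≤ k → ∀ j, x k j ≤ s k ^ r j * v j := by
  refine Int.strong_induction_from_window hbase fun k hk ih => ?_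
  lift k to ℕ using (by omega)
  have hbk : b ≤ k := by exact_mod_cast hk
  have hlag := hdelay k hbk
  rw [hx.2 k]
  intro j
  have hf := hfmono.apply_le_dilation hfhom (hs k (by omega)) (hnonneg k (by omega))
    (ih k (by omega) le_rfl) j
  have hg := hgmono.apply_le_dilation hghom (hs _ hlag) (hnonneg _ (by omega))
    (ih _ hlag (by omega)) j
  exact (add_le_add hf hg).trans (hsuper k hbk j)

theorem exists_le_dilation (hx : IsSolutionD n f g d dmax φ x)
    (hfmono : NonDecOn n f) (hgmono : NonDecOn n g) {r : Fin n → ℝ}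
    (hfhom : Homogeneous n r 0 f) (hghom : Homogeneous n r 0 g)
    (hnonneg : ∀ k, -(dmax : ℤ) ≤ k → ∀ j, 0 ≤ x k j) (hd : ∀ k : ℕ, -(dmax : ℤ) ≤ k - d k)
    (hr : ∀ j, 0 < r j) {v : Fin n → ℝ} (hv : ∀ j, 0 < v j)
    (hfgv : ∀ j, f v j + g v j ≤ v j) :
    ∃ Λ > 0, ∀ k, -(dmax : ℤ) ≤ k → ∀ j, x k j ≤ Λ ^ r j * v j := by
  have hlarge : ∀ᶠ Λ : ℝ in atTop,
      ∀ k ∈ Finset.Icc (-(dmax : ℤ)) 0, ∀ j, x k j ≤ Λ ^ r j * v j := by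
    rw [eventually_all_finset]
    refine fun k _ => eventually_all.2 fun j => ?_
    exact ((tendsto_rpow_atTop (hr j)).atTop_mul_const (hv j)).eventually_ge_atTop _
  obtain ⟨Λ, hΛ, hΛpos⟩ := (hlarge.and (eventually_gt_atTop 0)).exists
  refine ⟨Λ, hΛpos, hx.le_dilation_of_supersolution hfmono hgmono hfhom hghom hnonneg
    (s := fun _ => Λ) (b := 0) le_rfl (fun _ _ => hΛpos) (fun k _ => hd k)
    (fun k hk hk0 => hΛ k (Finset.mem_Icc.2 ⟨hk, hk0⟩)) fun k _ j => ?_⟩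
  rw [← mul_add]
  exact mul_le_mul_of_nonneg_left (hfgv j) (Real.rpow_nonneg hΛpos.le _)

theorem le_dilation_of_mu_ratio_le (hx : IsSolutionD n f g d dmax φ x)
    (hfmono : NonDecOn n f) (hgmono : NonDecOn n g) {r : Fin n → ℝ}
    (hfhom : Homogeneous n r 0 f) (hghom : Homogeneous n r 0 g)
    (hnonneg : ∀ k, -(dmax : ℤ) ≤ k → ∀ j, 0 ≤ x k j) (hr : ∀ j, 0 ≤ r j)
    {v : Fin n → ℝ} (hv : ∀ j, 0 < v j) {Λ : ℝ} (hΛ : 0 < Λ)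
    (hbounded : ∀ k, -(dmax : ℤ) ≤ k → ∀ j, x k j ≤ Λ ^ r j * v j)
    {μ : ℕ → ℝ} (hμpos : ∀ k, 1 ≤ k → 0 < μ k) (hμmono : MonotoneOn μ {k | 1 ≤ k})
    {rmax : ℝ} (hrmax : 0 < rmax) {K : ℕ} (hK1 : 1 ≤ K)
    (hK : ∀ k ≥ K, 1 ≤ (k : ℤ) - d k ∧ ∀ j,
      (μ (k + 1) / μ k) ^ (r j / rmax) * (f v j / v j) +
        (μ (k + 1) / μ ((k : ℤ) - d k).toNat) ^ (r j / rmax) * (g v j / v j) ≤ 1) :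
    ∀ k : ℕ, 1 ≤ k → ∀ j, x k j ≤ ((Λ ^ rmax * μ K / μ k) ^ rmax⁻¹) ^ r j * v j := by
  set C := Λ ^ rmax * μ K
  have hC : 0 < C := mul_pos (Real.rpow_pos_of_pos hΛ _) (hμpos K hK1)
  set s : ℤ → ℝ := fun k => (C / μ k.toNat) ^ rmax⁻¹
  have hs : ∀ k : ℤ, 1 ≤ k → 0 < s k := fun k hk =>
    Real.rpow_pos_of_pos (div_pos hC (hμpos _ (by omega))) _
  have hs_rpow : ∀ k : ℤ, 1 ≤ k → ∀ ρ, s k ^ ρ = (C / μ k.toNat) ^ (ρ / rmax) := fun k hk ρ => by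
    rw [← Real.rpow_mul (div_pos hC (hμpos _ (by omega))).le, inv_mul_eq_div]
  intro k hk
  refine hx.le_dilation_of_supersolution hfmono hgmono hfhom hghom hnonneg (s := s) (a := 1)
    (b := K) (by omega) hs (fun k hk => (hK k hk).1) (fun k hk hkK j => ?_) (fun k hk j => ?_) k
    (by exact_mod_cast hk)
  · have hΛs : Λ ≤ s k := le_rpow_mul_div_rpow_inv hΛ.le hrmax (hμpos _ (by omega))
      (hμmono (show 1 ≤ k.toNat by omega) hK1 (by omega))
    calc x k j ≤ Λ ^ r j * v j := hbounded k (by omega) j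
      _ ≤ s k ^ r j * v j := mul_le_mul_of_nonneg_right
          (Real.rpow_le_rpow hΛ.le hΛs (hr j)) (hv j).le
  · obtain ⟨hlag, hratio⟩ := hK k hk
    rw [hs_rpow _ (by omega), hs_rpow _ hlag, hs_rpow _ (by omega), ← Nat.cast_succ,
      Int.toNat_natCast, Int.toNat_natCast]
    exact rpow_div_mul_add_le hC.le (hμpos k (by omega)) (hμpos _ (by omega))
      (hμpos _ (by omega)) (hv j) (hratio j)

end IsSolutionD

theorem discrete_homogeneous_nondecreasing_mu_stability_general
    (n : ℕ) (f g : (Fin n → ℝ) → Fin n → ℝ)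
    (r : Fin n → ℝ) (hr : ∀ i, 0 < r i)
    (rmax : ℝ) (hrmax_mem : ∃ i, r i = rmax)
    (hf0 : f 0 = 0) (hg0 : g 0 = 0)
    (hfmono : NonDecOn n f) (hgmono : NonDecOn n g)
    (hfhom : Homogeneous n r 0 f) (hghom : Homogeneous n r 0 g)
    (d : ℕ → ℕ) (dmax : ℕ) (hd : DelayC d dmax)
    (v : Fin n → ℝ) (hv : ∀ i, 0 < v i) (hfgv : ∀ i, f v i + g v i < v i)
    (μ : ℕ → ℝ)
    (hμpos : ∀ k : ℕ, 1 ≤ k → 0 < μ k)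
    (hμmono : ∀ k : ℕ, 1 ≤ k → μ k ≤ μ (k + 1))
    (L₁ L₂ : ℝ)
    (hL₁ : Tendsto (fun k : ℕ => μ (k + 1) / μ k) atTop (nhds L₁))
    (hL₂ : Tendsto (fun k : ℕ => μ (k + 1) / μ ((k : ℤ) - (d k : ℤ)).toNat) atTop (nhds L₂))
    (hcond : ∀ i, L₁ ^ (r i / rmax) * (f v i / v i) +
        L₂ ^ (r i / rmax) * (g v i / v i) < 1)
    (φ x : ℤ → Fin n → ℝ)
    (hφ : NonnegInitD n dmax φ)
    (hx : IsSolutionD n f g d dmax φ x) :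
    ∀ i, ∃ C > (0 : ℝ), ∀ k : ℕ, 1 ≤ k →
      (x (k : ℤ) i / v i) ^ (rmax / r i) ≤ C / μ k := by
  intro i
  obtain ⟨i₀, hi₀⟩ := hrmax_mem
  have hrmax : 0 < rmax := hi₀ ▸ hr i₀
  have hnonneg := hx.nonneg hfmono hgmono hf0 hg0 hd.2 hφ
  obtain ⟨Λ, hΛ, hbounded⟩ := hx.exists_le_dilation hfmono hgmono hfhom hghom hnonneg hd.2 hr hv
    fun j => (hfgv j).le
  obtain ⟨K, hK⟩ := eventually_atTop.1 <| (eventually_ge_atTop 1).and <|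
    (hd.1.eventually_ge_atTop 1).and <| eventually_rpow_mul_add_rpow_mul_lt hL₁ hL₂
      (fun j => (div_pos (hr j) hrmax).le) hcond
  have hK1 : 1 ≤ K := (hK K le_rfl).1
  set C := Λ ^ rmax * μ K
  have hC : 0 < C := mul_pos (Real.rpow_pos_of_pos hΛ _) (hμpos K hK1)
  have hbound := hx.le_dilation_of_mu_ratio_le hfmono hgmono hfhom hghom hnonneg
    (fun j => (hr j).le) hv hΛ hbounded hμpos (monotoneOn_nat_Ici_of_le_succ hμmono) hrmax hK1
    fun k hk => ⟨(hK k hk).2.1, fun j => ((hK k hk).2.2 j).le⟩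
  refine ⟨C, hC, fun k hk => ?_⟩
  have hCk : 0 ≤ C / μ k := (div_pos hC (hμpos k hk)).le
  simpa only [Real.rpow_inv_rpow hCk hrmax.ne'] using rpow_div_le_of_le_rpow_mul
    (hnonneg k (by omega) i) (hv i) (Real.rpow_nonneg hCk _) (hr i) hrmax.le (hbound k hk i)

/-- Theorem (discrete μ-stability, degree-zero case): under Assumption C on the delay and the
existence of `v > 0` with `f(v) + g(v) < v`, if `μ : ℕ → ℝ` is positive, non-decreasing and
tends to infinity, and the limits `L₁ = lim μ(k+1)/μ(k)` and `L₂ = lim μ(k+1)/μ(k-d(k))`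
exist and satisfy `L₁^{rᵢ/rmax} fᵢ(v)/vᵢ + L₂^{rᵢ/rmax} gᵢ(v)/vᵢ < 1` for all `i`, then
every solution from a nonnegative initial condition satisfies
`(xᵢ(k)/vᵢ)^{rmax/rᵢ} = O(1/μ(k))`. -/
theorem discrete_homogeneous_nondecreasing_mu_stability
    (n : ℕ) (f g : (Fin n → ℝ) → Fin n → ℝ)
    (r : Fin n → ℝ) (hr : ∀ i, 0 < r i)
    (rmax : ℝ) (hrmax_ub : ∀ i, r i ≤ rmax) (hrmax_mem : ∃ i, r i = rmax)
    (hf0 : f 0 = 0) (hg0 : g 0 = 0)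
    (hfc : Continuous f) (hgc : Continuous g)
    (hfmono : NonDecOn n f) (hgmono : NonDecOn n g)
    (hfhom : Homogeneous n r 0 f) (hghom : Homogeneous n r 0 g)
    (d : ℕ → ℕ) (dmax : ℕ) (hd : DelayC d dmax)
    (v : Fin n → ℝ) (hv : ∀ i, 0 < v i) (hfgv : ∀ i, f v i + g v i < v i)
    (μ : ℕ → ℝ)
    (hμpos : ∀ k : ℕ, 1 ≤ k → 0 < μ k)
    (hμmono : ∀ k : ℕ, 1 ≤ k → μ k ≤ μ (k + 1))
    (hμinf : Tendsto μ atTop atTop)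
    (L₁ L₂ : ℝ)
    (hL₁ : Tendsto (fun k : ℕ => μ (k + 1) / μ k) atTop (nhds L₁))
    (hL₂ : Tendsto (fun k : ℕ => μ (k + 1) / μ ((k : ℤ) - (d k : ℤ)).toNat) atTop (nhds L₂))
    (hcond : ∀ i, L₁ ^ (r i / rmax) * (f v i / v i) +
        L₂ ^ (r i / rmax) * (g v i / v i) < 1)
    (φ x : ℤ → Fin n → ℝ)
    (hφ : NonnegInitD n dmax φ)
    (hx : IsSolutionD n f g d dmax φ x) :
    ∀ i, ∃ C > (0 : ℝ), ∀ k : ℕ, 1 ≤ k →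
      (x (k : ℤ) i / v i) ^ (rmax / r i) ≤ C / μ k :=
  discrete_homogeneous_nondecreasing_mu_stability_general n f g r hr rmax hrmax_mem hf0 hg0 hfmono
    hgmono hfhom hghom d dmax hd v hv hfgv μ hμpos hμmono L₁ L₂ hL₁ hL₂ hcond φ x hφ hx
end
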